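/- arXiv:1502.08048 — 4 statements merged into one kernel-verified Lean document; each statement's English description precedes it below -/
import Mathlib

section
/- Let P be a finite set of points in ℝ^d and let q, q' ∈ P. Then the nearest neighbor length of the straight line segment from q to q' is at most ‖q − q'‖²/4; that is, ∫₀¹ dnn((1−t)q + t·q')·‖q' − q‖ dt ≤ ‖q − q'‖²/4. -/
variable {E : Type*} [NormedAddCommGroup E] [NormedSpace ℝ E]

/-- Distance from `x` to the nearest point of `P`. -/
noncomputable def dnn (P : Set E) (x : E) : ℝ := Metric.infDist x P

/-- A piecewise-differentiable curve on `[0,1]`: continuous, and differentiable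
except at finitely many points. -/
def PiecewiseDiff (γ : ℝ → E) : Prop :=
  ContinuousOn γ (Set.Icc 0 1) ∧
    ∃ F : Finset ℝ, ∀ t ∈ Set.Icc (0:ℝ) 1 \ (F : Set ℝ), DifferentiableAt ℝ γ t

/-- Nearest neighbor length of a curve: `∫₀¹ dnn(γ t) ⬝ ‖γ' t‖ dt`. -/
noncomputable def nnLength (P : Set E) (γ : ℝ → E) : ℝ :=
  ∫ t in (0:ℝ)..1, dnn P (γ t) * ‖deriv γ t‖

/-- Euclidean length of a curve: `∫₀¹ ‖γ' t‖ dt`. -/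
noncomputable def euclLength (γ : ℝ → E) : ℝ :=
  ∫ t in (0:ℝ)..1, ‖deriv γ t‖

/-- Nearest neighbor distance: infimum of nearest neighbor lengths of
piecewise-differentiable curves from `x` to `y`. -/
noncomputable def nndist (P : Set E) (x y : E) : ℝ :=
  sInf { l : ℝ | ∃ γ : ℝ → E, PiecewiseDiff γ ∧ γ 0 = x ∧ γ 1 = y ∧ l = nnLength P γ }

/-- Edge-squared distance: shortest path distance in the complete graph on `P`
where each edge has weight the square of its Euclidean length. -/
noncomputable def sqdist (P : Set E) (x y : E) : ℝ :=
  sInf { l : ℝ | ∃ (k : ℕ) (q : ℕ → E), q 0 = x ∧ q k = y ∧ (∀ i ≤ k, q i ∈ P) ∧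
    l = ∑ i ∈ Finset.range k, ‖q i - q (i+1)‖ ^ 2 }

/-- Nearest neighbor length of the straight segment from `a` to `b`. -/
noncomputable def nnSegLength (P : Set E) (a b : E) : ℝ :=
  ∫ t in (0:ℝ)..1, dnn P ((1 - t) • a + t • b) * ‖b - a‖

/-- For `q, q' ∈ P`, the nearest neighbor length of the straight
segment from `q` to `q'` is at most `‖q − q'‖²/4`. -/
theorem nnLength_segment_le {d : ℕ} (P : Finset (EuclideanSpace ℝ (Fin d)))
    (q q' : EuclideanSpace ℝ (Fin d)) (hq : q ∈ P) (hq' : q' ∈ P) :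
    (∫ t in (0:ℝ)..1,
        dnn (P : Set (EuclideanSpace ℝ (Fin d))) ((1 - t) • q + t • q') * ‖q' - q‖) ≤
      ‖q - q'‖ ^ 2 / 4 := by
  set L := ‖q - q'‖ with hLdef
  have hLrev : ‖q' - q‖ = L := by rw [hLdef, norm_sub_rev]
  have hL0 : 0 ≤ L := norm_nonneg _
  have hcont : Continuous fun t : ℝ =>
      dnn (P : Set (EuclideanSpace ℝ (Fin d))) ((1 - t) • q + t • q') := by
    apply (Metric.continuous_infDist_pt _).comp
    continuity
  have hInt1 : IntervalIntegrable
      (fun t => dnn (P : Set (EuclideanSpace ℝ (Fin d))) ((1 - t) • q + t • q') * ‖q' - q‖)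
      MeasureTheory.volume 0 1 := (hcont.mul continuous_const).intervalIntegrable 0 1
  have hInt2 : IntervalIntegrable (fun t : ℝ => min t (1 - t) * L ^ 2)
      MeasureTheory.volume 0 1 := by
    apply Continuous.intervalIntegrable
    exact (continuous_id.min (continuous_const.sub continuous_id)).mul continuous_const
  have hmono : ∀ t ∈ Set.Icc (0:ℝ) 1,
      dnn (P : Set (EuclideanSpace ℝ (Fin d))) ((1 - t) • q + t • q') * ‖q' - q‖
        ≤ min t (1 - t) * L ^ 2 := by
    intro t ht
    have h1 : dnn (P : Set (EuclideanSpace ℝ (Fin d))) ((1 - t) • q + t • q') ≤ t * L := by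
      calc dnn (P : Set (EuclideanSpace ℝ (Fin d))) ((1 - t) • q + t • q')
          ≤ dist ((1 - t) • q + t • q') q := Metric.infDist_le_dist_of_mem hq
        _ = t * L := by
            rw [dist_eq_norm]
            have h : (1 - t) • q + t • q' - q = t • (q' - q) := by module
            rw [h, norm_smul, Real.norm_eq_abs, abs_of_nonneg ht.1, hLrev]
    have h2 : dnn (P : Set (EuclideanSpace ℝ (Fin d))) ((1 - t) • q + t • q') ≤ (1 - t) * L := by
      calc dnn (P : Set (EuclideanSpace ℝ (Fin d))) ((1 - t) • q + t • q')
          ≤ dist ((1 - t) • q + t • q') q' := Metric.infDist_le_dist_of_mem hq'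
        _ = (1 - t) * L := by
            rw [dist_eq_norm]
            have h : (1 - t) • q + t • q' - q' = (1 - t) • (q - q') := by module
            rw [h, norm_smul, Real.norm_eq_abs, abs_of_nonneg (by linarith [ht.2] : (0:ℝ) ≤ 1 - t)]
    rw [hLrev]
    rcases le_total t (1 - t) with h | h
    · rw [min_eq_left h]; nlinarith
    · rw [min_eq_right h]; nlinarith
  have key : (∫ t in (0:ℝ)..1,
      dnn (P : Set (EuclideanSpace ℝ (Fin d))) ((1 - t) • q + t • q') * ‖q' - q‖)
        ≤ ∫ t in (0:ℝ)..1, min t (1 - t) * L ^ 2 :=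
    intervalIntegral.integral_mono_on (by norm_num) hInt1 hInt2 hmono
  have hmin : (∫ t in (0:ℝ)..1, min t (1 - t)) = 1 / 4 := by
    have hsplit : (∫ t in (0:ℝ)..(1/2:ℝ), min t (1 - t)) + (∫ t in (1/2:ℝ)..1, min t (1 - t))
        = ∫ t in (0:ℝ)..1, min t (1 - t) := by
      apply intervalIntegral.integral_add_adjacent_intervals <;>
        exact (continuous_id.min (continuous_const.sub continuous_id)).intervalIntegrable _ _
    have e1 : (∫ t in (0:ℝ)..(1/2:ℝ), min t (1 - t)) = ∫ t in (0:ℝ)..(1/2:ℝ), t := by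
      apply intervalIntegral.integral_congr
      intro t ht
      rw [Set.uIcc_of_le (by norm_num : (0:ℝ) ≤ 1/2)] at ht
      exact min_eq_left (by linarith [ht.1, ht.2])
    have e2 : (∫ t in (1/2:ℝ)..1, min t (1 - t)) = ∫ t in (1/2:ℝ)..1, (1 - t) := by
      apply intervalIntegral.integral_congr
      intro t ht
      rw [Set.uIcc_of_le (by norm_num : (1/2:ℝ) ≤ 1)] at ht
      exact min_eq_right (by linarith [ht.1, ht.2])
    rw [← hsplit, e1, e2]
    rw [integral_id,
      intervalIntegral.integral_sub (intervalIntegrable_const)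
        (continuous_id'.intervalIntegrable _ _),
      integral_id, intervalIntegral.integral_const]
    norm_num
  calc (∫ t in (0:ℝ)..1,
      dnn (P : Set (EuclideanSpace ℝ (Fin d))) ((1 - t) • q + t • q') * ‖q' - q‖)
      ≤ ∫ t in (0:ℝ)..1, min t (1 - t) * L ^ 2 := key
    _ = (∫ t in (0:ℝ)..1, min t (1 - t)) * L ^ 2 := intervalIntegral.integral_mul_const _ _
    _ = L ^ 2 / 4 := by rw [hmin]; ring
end

section
/- Let P = {p₁, …, p_n} be a set of points in ℝ^d, let x, y ∈ P, and let γ:[0,1]→ℝ^d be a rectifiable path from x to y that is internally disjoint from P (γ(t) ∉ P for 0 < t < 1). Then there exists a proper breaking sequence of γ, i.e., a sequence 0 < t₀ ≤ t₁ ≤ ⋯ ≤ t_k < 1 such that (1) the nearest neighbor in P of γ(t₀) is x and the nearest neighbor in P of γ(t_k) is y, and (2) for all 1 ≤ i ≤ k, the Euclidean arc length of γ restricted to [t_{i−1}, t_i] equals (1/2)·(dnn(γ(t_{i−1})) + dnn(γ(t_i))). -/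
variable {E : Type*} [NormedAddCommGroup E] [NormedSpace ℝ E]

open Set Metric
open scoped ENNReal NNReal Topology

lemma key_right {X : Type*} [PseudoMetricSpace X] {γ : ℝ → X} {a b : ℝ}
    (hcont : ContinuousOn γ (Icc a b)) (hbv : BoundedVariationOn γ (Icc a b))
    {c : ℝ} (hc : c ∈ Ico a b) {ε : ℝ} (hε : 0 < ε) :
    ∃ t' ∈ Ioc c b, eVariationOn γ (Icc a b ∩ Icc c t') < ENNReal.ofReal ε := by
  by_contra hcon
  push_neg at hcon
  have step : ∀ r ∈ Ioc c b, ∃ r' ∈ Ioo c r,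
      ENNReal.ofReal (ε/4) ≤ eVariationOn γ (Icc a b ∩ Icc r' r) := by
    intro r hr
    have hbig : ENNReal.ofReal (ε/2) < eVariationOn γ (Icc a b ∩ Icc c r) :=
      lt_of_lt_of_le ((ENNReal.ofReal_lt_ofReal_iff hε).2 (by linarith)) (hcon r hr)
    rw [eVariationOn] at hbig
    obtain ⟨⟨n, u, hu, us⟩, hsum⟩ := lt_iSup_iff.mp hbig
    simp only at hsum
    -- choose m
    set T : Finset ℝ := insert r (((Finset.range (n+1)).image u).filter (fun z => c < z)) with hT
    have hTne : T.Nonempty := ⟨r, Finset.mem_insert_self _ _⟩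
    set m := T.min' hTne with hm
    have hcm : c < m := by
      rw [Finset.lt_min'_iff]
      intro z hz
      rcases Finset.mem_insert.mp hz with h | h
      · exact h ▸ hr.1
      · exact (Finset.mem_filter.mp h).2
    have hmr : m ≤ r := Finset.min'_le _ _ (Finset.mem_insert_self _ _)
    have key_m : ∀ i ≤ n, c < u i → m ≤ u i := by
      intro i hi hci
      exact Finset.min'_le _ _ (Finset.mem_insert_of_mem (Finset.mem_filter.mpr
        ⟨Finset.mem_image_of_mem u (Finset.mem_range.mpr (Nat.lt_succ_of_le hi)), hci⟩))
    -- choose t''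
    set D : ℝ≥0∞ := 2 * (n : ℝ≥0∞) + 2 with hD
    have hD0 : D ≠ 0 := by simp [hD]
    have hDtop : D ≠ ∞ := by
      simp [hD, ENNReal.add_ne_top, ENNReal.mul_ne_top, ENNReal.natCast_ne_top]
    set δ : ℝ≥0∞ := ENNReal.ofReal (ε/4) / D with hδ
    have hδ0 : 0 < δ := ENNReal.div_pos (ENNReal.ofReal_pos.mpr (by linarith)).ne' hDtop
    have hIoo : Ioo c m ⊆ Icc a b := fun z hz =>
      ⟨(hc.1.trans hz.1.le), hz.2.le.trans (hmr.trans hr.2)⟩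
    have hne : (𝓝[Ioo c m] c).NeBot := by
      rw [← mem_closure_iff_nhdsWithin_neBot, closure_Ioo (ne_of_lt hcm)]
      exact ⟨le_rfl, hcm.le⟩
    have htends : Filter.Tendsto γ (𝓝[Ioo c m] c) (𝓝 (γ c)) :=
      (hcont c ⟨hc.1, hc.2.le⟩).mono hIoo
    have hev : ∀ᶠ z in 𝓝[Ioo c m] c, edist (γ z) (γ c) < δ :=
      EMetric.tendsto_nhds.mp htends δ hδ0
    obtain ⟨t'', ht''dist, ht''mem⟩ := (hev.and (eventually_mem_nhdsWithin)).exists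
    -- modified partition
    set w : ℕ → ℝ := fun i => max (u i) t'' with hw
    have hwmono : Monotone w := fun i j h => max_le_max (hu h) le_rfl
    have hws : ∀ i, w i ∈ Icc a b ∩ Icc t'' r := by
      intro i
      obtain ⟨⟨h1, h2⟩, ⟨h3, h4⟩⟩ := us i
      have ht''r : t'' ≤ r := (ht''mem.2.le.trans hmr)
      exact ⟨⟨le_max_of_le_left h1, max_le h2 (ht''r.trans hr.2)⟩,
        ⟨le_max_right _ _, max_le h4 ht''r⟩⟩
    have hclose : ∀ i ≤ n, edist (γ (u i)) (γ (w i)) ≤ δ := by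
      intro i hi
      rcases le_or_gt t'' (u i) with h | h
      · simp [hw, max_eq_left h]
      · have huc : u i = c := by
          refine le_antisymm ?_ (us i).2.1
          by_contra hlt
          push_neg at hlt
          exact absurd (key_m i hi hlt) (by linarith [ht''mem.2])
        have : w i = t'' := by
          simp [hw, huc, max_eq_right (le_of_lt (huc ▸ h))]
        rw [huc, this, edist_comm]
        exact ht''dist.le
    have hterm : ∀ i < n, edist (γ (u (i+1))) (γ (u i)) ≤
        edist (γ (w (i+1))) (γ (w i)) + 2 * δ := by
      intro i hi
      calc edist (γ (u (i+1))) (γ (u i))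
          ≤ edist (γ (u (i+1))) (γ (w (i+1))) + edist (γ (w (i+1))) (γ (w i))
            + edist (γ (w i)) (γ (u i)) := edist_triangle4 _ _ _ _
        _ ≤ δ + edist (γ (w (i+1))) (γ (w i)) + δ := by
            gcongr
            · exact hclose (i+1) hi
            · rw [edist_comm]; exact hclose i hi.le
        _ = edist (γ (w (i+1))) (γ (w i)) + 2 * δ := by ring
    have hsum2 : (∑ i ∈ Finset.range n, edist (γ (u (i+1))) (γ (u i))) ≤
        (∑ i ∈ Finset.range n, edist (γ (w (i+1))) (γ (w i))) + (n : ℝ≥0∞) * (2 * δ) := by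
      calc (∑ i ∈ Finset.range n, edist (γ (u (i+1))) (γ (u i)))
          ≤ ∑ i ∈ Finset.range n, (edist (γ (w (i+1))) (γ (w i)) + 2 * δ) :=
            Finset.sum_le_sum (fun i hi => hterm i (Finset.mem_range.mp hi))
        _ = _ := by
            rw [Finset.sum_add_distrib, Finset.sum_const, Finset.card_range, nsmul_eq_mul]
    have hwsum : (∑ i ∈ Finset.range n, edist (γ (w (i+1))) (γ (w i))) ≤
        eVariationOn γ (Icc a b ∩ Icc t'' r) := eVariationOn.sum_le (f := γ) (n := n) hwmono hws
    have hnd : (n : ℝ≥0∞) * (2 * δ) ≤ ENNReal.ofReal (ε/4) := by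
      calc (n : ℝ≥0∞) * (2 * δ) = (2 * (n : ℝ≥0∞)) * δ := by ring
        _ ≤ D * δ := by
            apply mul_le_mul_left (by simp [hD, le_self_add] : 2 * (n:ℝ≥0∞) ≤ D)
        _ = ENNReal.ofReal (ε/4) := ENNReal.mul_div_cancel hD0 hDtop
    have hfinal : ENNReal.ofReal (ε/2) ≤
        eVariationOn γ (Icc a b ∩ Icc t'' r) + ENNReal.ofReal (ε/4) :=
      le_trans (le_trans hsum.le hsum2) (add_le_add hwsum hnd)
    refine ⟨t'', ⟨ht''mem.1, lt_of_lt_of_le ht''mem.2 hmr⟩, ?_⟩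
    have := tsub_le_iff_right.mpr hfinal
    rw [← ENNReal.ofReal_sub _ (by linarith)] at this
    convert this using 2
    ring
  -- iteration
  have iter : ∀ k : ℕ, ∃ r ∈ Ioc c b,
      (k : ℝ≥0∞) * ENNReal.ofReal (ε/4) ≤ eVariationOn γ (Icc a b ∩ Icc r b) := by
    intro k
    induction k with
    | zero => exact ⟨b, ⟨hc.2, le_rfl⟩, by simp⟩
    | succ k ih =>
        obtain ⟨r, hr, hVr⟩ := ih
        obtain ⟨r', hr', hVr'⟩ := step r hr
        refine ⟨r', ⟨hr'.1, hr'.2.le.trans hr.2⟩, ?_⟩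
        have hadd := eVariationOn.Icc_add_Icc (s := Icc a b) γ (le_of_lt hr'.2) hr.2
          (show r ∈ Icc a b from ⟨(hc.1.trans hr'.1.le).trans hr'.2.le, hr.2⟩)
        rw [← hadd]
        push_cast
        calc ((k : ℝ≥0∞) + 1) * ENNReal.ofReal (ε/4)
            = ENNReal.ofReal (ε/4) + (k : ℝ≥0∞) * ENNReal.ofReal (ε/4) := by ring
          _ ≤ _ := add_le_add hVr' hVr
  -- contradiction
  have hT : eVariationOn γ (Icc a b) ≠ ∞ := hbv
  obtain ⟨k, hk⟩ := ENNReal.exists_nat_gt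
    (ENNReal.div_lt_top hT (ENNReal.ofReal_pos.mpr (show (0:ℝ) < ε/4 by linarith)).ne').ne
  obtain ⟨r, hr, hVr⟩ := iter k
  have hle : eVariationOn γ (Icc a b ∩ Icc r b) ≤ eVariationOn γ (Icc a b) :=
    eVariationOn.mono γ inter_subset_left
  have : eVariationOn γ (Icc a b) < (k : ℝ≥0∞) * ENNReal.ofReal (ε/4) := by
    rw [← ENNReal.div_lt_iff (Or.inl (ENNReal.ofReal_pos.mpr (by linarith)).ne')
      (Or.inl ENNReal.ofReal_ne_top)]
    exact hk
  exact absurd (hVr.trans hle) (not_le.mpr this)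

lemma image_neg_Icc' (p q : ℝ) : (fun z : ℝ => -z) '' Icc p q = Icc (-q) (-p) := by
  ext z
  simp only [mem_image, mem_Icc]
  constructor
  · rintro ⟨w, ⟨h1, h2⟩, rfl⟩; constructor <;> linarith
  · rintro ⟨h1, h2⟩; exact ⟨-z, ⟨by linarith, by linarith⟩, by ring⟩

lemma key_left {X : Type*} [PseudoMetricSpace X] {γ : ℝ → X} {a b : ℝ}
    (hcont : ContinuousOn γ (Icc a b)) (hbv : BoundedVariationOn γ (Icc a b))
    {c : ℝ} (hc : c ∈ Ioc a b) {ε : ℝ} (hε : 0 < ε) :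
    ∃ t' ∈ Ico a c, eVariationOn γ (Icc a b ∩ Icc t' c) < ENNReal.ofReal ε := by
  set γ' : ℝ → X := fun z => γ (-z) with hγ'
  have hanti : ∀ s : Set ℝ, AntitoneOn (fun z : ℝ => -z) s := fun s x _ y _ hxy => by simpa using neg_le_neg hxy
  have hIccim : (fun z : ℝ => -z) '' Icc (-b) (-a) = Icc a b := by
    rw [image_neg_Icc']; simp
  have hcont' : ContinuousOn γ' (Icc (-b) (-a)) := by
    apply hcont.comp (continuous_neg.continuousOn)
    intro z hz
    rw [← hIccim]; exact mem_image_of_mem _ hz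
  have hvar : ∀ p q : ℝ, eVariationOn γ' (Icc (-b) (-a) ∩ Icc p q) =
      eVariationOn γ (Icc a b ∩ Icc (-q) (-p)) := by
    intro p q
    rw [show eVariationOn γ' (Icc (-b) (-a) ∩ Icc p q) =
        eVariationOn γ ((fun z : ℝ => -z) '' (Icc (-b) (-a) ∩ Icc p q)) from
      eVariationOn.comp_eq_of_antitoneOn γ _ (hanti _),
      Set.image_inter (fun u v huv => by simpa using huv), hIccim, image_neg_Icc']
  have hbv' : BoundedVariationOn γ' (Icc (-b) (-a)) := by
    unfold BoundedVariationOn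
    rw [show eVariationOn γ' (Icc (-b) (-a)) =
        eVariationOn γ ((fun z : ℝ => -z) '' Icc (-b) (-a)) from
      eVariationOn.comp_eq_of_antitoneOn γ _ (hanti _), hIccim]
    exact hbv
  have hc' : -c ∈ Ico (-b) (-a) := ⟨by linarith [hc.2], by linarith [hc.1]⟩
  obtain ⟨t', ht', hvt'⟩ := key_right hcont' hbv' hc' hε
  refine ⟨-t', ⟨by linarith [ht'.2], by linarith [ht'.1]⟩, ?_⟩
  have := hvar (-c) t'
  rw [neg_neg] at this
  rw [← this]
  exact hvt'

lemma var_cont {X : Type*} [PseudoMetricSpace X] {γ : ℝ → X}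
    (hcont : ContinuousOn γ (Icc 0 1)) (hbv : BoundedVariationOn γ (Icc (0:ℝ) 1)) :
    ContinuousOn (fun t => variationOnFromTo γ (Icc 0 1) 0 t) (Icc (0:ℝ) 1) := by
  have locBV : LocallyBoundedVariationOn γ (Icc (0:ℝ) 1) := hbv.locallyBoundedVariationOn
  set v : ℝ → ℝ := fun t => variationOnFromTo γ (Icc 0 1) 0 t with hv
  intro c hc
  rw [Metric.continuousWithinAt_iff]
  intro ε hε
  have hdist : ∀ u₁ u₂ : ℝ, u₁ ∈ Icc (0:ℝ) 1 → u₂ ∈ Icc (0:ℝ) 1 → u₁ ≤ u₂ →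
      eVariationOn γ (Icc 0 1 ∩ Icc u₁ u₂) < ENNReal.ofReal ε →
      dist (v u₂) (v u₁) < ε := by
    intro u₁ u₂ h1 h2 h12 hvar
    have hadd : v u₁ + variationOnFromTo γ (Icc 0 1) u₁ u₂ = v u₂ :=
      variationOnFromTo.add locBV (left_mem_Icc.mpr zero_le_one) h1 h2
    have hnn : 0 ≤ variationOnFromTo γ (Icc 0 1) u₁ u₂ :=
      variationOnFromTo.nonneg_of_le γ _ h12
    have heq : variationOnFromTo γ (Icc 0 1) u₁ u₂ =
        (eVariationOn γ (Icc 0 1 ∩ Icc u₁ u₂)).toReal := variationOnFromTo.eq_of_le γ _ h12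
    have hlt : variationOnFromTo γ (Icc 0 1) u₁ u₂ < ε := by
      rw [heq]
      exact ENNReal.toReal_lt_of_lt_ofReal hvar
    rw [Real.dist_eq, abs_of_nonneg (by linarith)]
    linarith
  have hright : ∃ p, c < p ∧ ∀ u ∈ Icc (0:ℝ) 1, c ≤ u → u < p → dist (v u) (v c) < ε := by
    rcases lt_or_ge c 1 with h | h
    · obtain ⟨t', ht', hvt'⟩ := key_right hcont hbv (show c ∈ Ico (0:ℝ) 1 from ⟨hc.1, h⟩) hε
      refine ⟨t', ht'.1, fun u hu hcu hup => ?_⟩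
      refine hdist c u hc hu hcu (lt_of_le_of_lt (eVariationOn.mono γ ?_) hvt')
      exact inter_subset_inter_right _ (Icc_subset_Icc_right hup.le)
    · refine ⟨c + 1, by linarith, fun u hu hcu _ => ?_⟩
      have : u = c := le_antisymm (hu.2.trans h) hcu
      rw [this]
      simpa using hε
  have hleft : ∃ q, q < c ∧ ∀ u ∈ Icc (0:ℝ) 1, u ≤ c → q < u → dist (v u) (v c) < ε := by
    rcases lt_or_ge 0 c with h | h
    · obtain ⟨t', ht', hvt'⟩ := key_left hcont hbv (show c ∈ Ioc (0:ℝ) 1 from ⟨h, hc.2⟩) hε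
      refine ⟨t', ht'.2, fun u hu huc hqu => ?_⟩
      rw [dist_comm]
      refine hdist u c hu hc huc (lt_of_le_of_lt (eVariationOn.mono γ ?_) hvt')
      exact inter_subset_inter_right _ (Icc_subset_Icc_left hqu.le)
    · refine ⟨c - 1, by linarith, fun u hu huc _ => ?_⟩
      have : u = c := le_antisymm huc (h.trans hu.1)
      rw [this]
      simpa using hε
  obtain ⟨p, hp, hP⟩ := hright
  obtain ⟨q, hq, hQ⟩ := hleft
  refine ⟨min (p - c) (c - q), by simp [hp, hq], fun u hu hdu => ?_⟩
  rcases le_total c u with h | h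
  · refine hP u hu h ?_
    have := lt_of_lt_of_le hdu (min_le_left _ _)
    rw [Real.dist_eq, abs_of_nonneg (by linarith)] at this
    linarith
  · refine hQ u hu h ?_
    have := lt_of_lt_of_le hdu (min_le_right _ _)
    rw [Real.dist_eq, abs_of_nonpos (by linarith)] at this
    linarith

lemma region {X : Type*} [MetricSpace X] (P : Finset X) {γ : ℝ → X}
    (hcont : ContinuousOn γ (Icc 0 1)) {c : ℝ} (hc : c ∈ Icc (0:ℝ) 1) {z : X}
    (hz : z ∈ P) (hγc : γ c = z) :
    ∃ δ > 0, ∀ t ∈ Icc (0:ℝ) 1, |t - c| < δ →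
      dist (γ t) z = Metric.infDist (γ t) (P : Set X) := by
  set Q : Set X := (P : Set X) \ {z} with hQ
  have hQfin : Q.Finite := P.finite_toSet.subset diff_subset
  have key : ∀ t ∈ Icc (0:ℝ) 1, dist (γ t) z < Metric.infDist (γ t) Q ∨ Q = ∅ →
      dist (γ t) z = Metric.infDist (γ t) (P : Set X) := by
    intro t _ h
    refine le_antisymm ?_ (infDist_le_dist_of_mem hz)
    by_contra hlt
    push_neg at hlt
    obtain ⟨p, hp, hdp⟩ := (infDist_lt_iff ⟨z, hz⟩).mp hlt
    have hpz : p ≠ z := fun he => by rw [he] at hdp; exact lt_irrefl _ hdp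
    have hpQ : p ∈ Q := ⟨hp, hpz⟩
    rcases h with h | h
    · exact absurd (lt_of_le_of_lt (infDist_le_dist_of_mem hpQ) hdp) (not_lt.mpr h.le)
    · rw [h] at hpQ; exact hpQ
  rcases eq_or_ne Q ∅ with hQe | hQne
  · exact ⟨1, one_pos, fun t ht _ => key t ht (Or.inr hQe)⟩
  · have hQne' : Q.Nonempty := nonempty_iff_ne_empty.mpr hQne
    have hzQ : z ∉ Q := fun h => h.2 rfl
    have hQclosed : IsClosed Q := hQfin.isClosed
    have hpos : 0 < Metric.infDist z Q := by
      rcases (lt_or_eq_of_le (infDist_nonneg (s := Q) (x := z))) with h | h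
      · exact h
      · exact absurd ((hQclosed.mem_iff_infDist_zero hQne').mpr h.symm) hzQ
    set g : ℝ → ℝ := fun t => Metric.infDist (γ t) Q - dist (γ t) z with hg
    have hgcont : ContinuousOn g (Icc 0 1) :=
      ((continuous_infDist_pt Q).comp_continuousOn hcont).sub
        ((continuous_id.dist continuous_const).comp_continuousOn hcont)
    have hgc : 0 < g c := by simp [hg, hγc, hpos]
    have hev : ∀ᶠ t in 𝓝[Icc (0:ℝ) 1] c, 0 < g t :=
      (hgcont c hc).eventually (eventually_gt_nhds hgc)
    obtain ⟨δ, hδ, hball⟩ := Metric.mem_nhdsWithin_iff.mp hev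
    refine ⟨δ, hδ, fun t ht htc => key t ht (Or.inl ?_)⟩
    have : 0 < g t := hball ⟨show dist t c < δ by rwa [Real.dist_eq], ht⟩
    simp only [hg] at this
    linarith


/-- Existence of a proper breaking sequence: for a rectifiable path
`γ` from `x ∈ P` to `y ∈ P` internally disjoint from `P`, there is a sequence
`0 < t₀ ≤ t₁ ≤ ⋯ ≤ t_k < 1` whose first (resp. last) point has nearest neighbor `x`
(resp. `y`), and such that the arc length of `γ` on `[t_{i-1}, t_i]` equals
`(dnn(γ(t_{i-1})) + dnn(γ(t_i)))/2`. -/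
theorem exists_breaking_sequence {d : ℕ} (P : Finset (EuclideanSpace ℝ (Fin d)))
    (x y : EuclideanSpace ℝ (Fin d)) (hx : x ∈ P) (hy : y ∈ P)
    (γ : ℝ → EuclideanSpace ℝ (Fin d))
    (hcont : ContinuousOn γ (Set.Icc 0 1))
    (hrect : BoundedVariationOn γ (Set.Icc 0 1))
    (h0 : γ 0 = x) (h1 : γ 1 = y)
    (hdisj : ∀ t ∈ Set.Ioo (0:ℝ) 1, γ t ∉ (P : Set (EuclideanSpace ℝ (Fin d)))) :
    ∃ (k : ℕ) (t : ℕ → ℝ),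
      (∀ i j, i ≤ j → j ≤ k → t i ≤ t j) ∧ 0 < t 0 ∧ t k < 1 ∧
      dist (γ (t 0)) x = dnn (P : Set (EuclideanSpace ℝ (Fin d))) (γ (t 0)) ∧
      dist (γ (t k)) y = dnn (P : Set (EuclideanSpace ℝ (Fin d))) (γ (t k)) ∧
      ∀ i, 1 ≤ i → i ≤ k →
        variationOnFromTo γ (Set.Icc 0 1) (t (i - 1)) (t i) =
          (dnn (P : Set (EuclideanSpace ℝ (Fin d))) (γ (t (i - 1))) +
            dnn (P : Set (EuclideanSpace ℝ (Fin d))) (γ (t i))) / 2 := by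
  classical
  set S : Set (EuclideanSpace ℝ (Fin d)) := (P : Set (EuclideanSpace ℝ (Fin d))) with hS
  set f : ℝ → ℝ := fun t => dnn S (γ t) with hf
  have hfc : ContinuousOn f (Icc 0 1) := (continuous_infDist_pt S).comp_continuousOn hcont
  have hfnn : ∀ t, 0 ≤ f t := fun t => infDist_nonneg
  have hfpos : ∀ t ∈ Ioo (0:ℝ) 1, 0 < f t := by
    intro t ht
    rcases lt_or_eq_of_le (hfnn t) with h | h
    · exact h
    · exfalso
      have hcl : IsClosed S := P.finite_toSet.isClosed
      exact hdisj t ht ((hcl.mem_iff_infDist_zero ⟨x, hx⟩).mpr h.symm)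
  have hf1 : f 1 = 0 := by
    simp only [hf, dnn, h1]
    exact infDist_zero_of_mem hy
  have hfley : ∀ t, f t ≤ dist (γ t) y := fun t => infDist_le_dist_of_mem hy
  have locBV : LocallyBoundedVariationOn γ (Icc (0:ℝ) 1) := hrect.locallyBoundedVariationOn
  set v : ℝ → ℝ := fun t => variationOnFromTo γ (Icc 0 1) 0 t with hv
  have hvc : ContinuousOn v (Icc (0:ℝ) 1) := var_cont hcont hrect
  have h0mem : (0:ℝ) ∈ Icc (0:ℝ) 1 := left_mem_Icc.mpr zero_le_one
  have h1mem : (1:ℝ) ∈ Icc (0:ℝ) 1 := right_mem_Icc.mpr zero_le_one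
  have hVadd : ∀ a' b' c' : ℝ, a' ∈ Icc (0:ℝ) 1 → b' ∈ Icc (0:ℝ) 1 → c' ∈ Icc (0:ℝ) 1 →
      variationOnFromTo γ (Icc 0 1) a' b' + variationOnFromTo γ (Icc 0 1) b' c' =
        variationOnFromTo γ (Icc 0 1) a' c' := fun a' b' c' ha hb hc =>
    variationOnFromTo.add locBV ha hb hc
  have hVeq : ∀ t' ∈ Icc (0:ℝ) 1, ∀ s' ∈ Icc (0:ℝ) 1,
      variationOnFromTo γ (Icc 0 1) s' t' = v t' - v s' := by
    intro t' ht' s' hs'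
    have := hVadd 0 s' t' h0mem hs' ht'
    simp only [hv]
    linarith
  have hdistV : ∀ u₁ u₂ : ℝ, u₁ ∈ Icc (0:ℝ) 1 → u₂ ∈ Icc (0:ℝ) 1 → u₁ ≤ u₂ →
      dist (γ u₁) (γ u₂) ≤ variationOnFromTo γ (Icc 0 1) u₁ u₂ := by
    intro u₁ u₂ h1' h2' h12
    rw [variationOnFromTo.eq_of_le γ _ h12]
    exact BoundedVariationOn.dist_le (hrect.mono inter_subset_left)
      ⟨h1', le_rfl, h12⟩ ⟨h2', h12, le_rfl⟩
  -- regions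
  obtain ⟨δx, hδx, hxreg⟩ := region P hcont h0mem hx h0
  obtain ⟨δy, hδy, hyreg0⟩ := region P hcont h1mem hy h1
  obtain ⟨s0, hs0pos, hs0le, hs0x⟩ :
      ∃ s0 : ℝ, 0 < s0 ∧ s0 ≤ 1/4 ∧ dist (γ s0) x = f s0 := by
    refine ⟨min (δx/2) (1/4), lt_min (by linarith) (by norm_num), min_le_right _ _, ?_⟩
    have h1' : min (δx/2) (1/4) ≤ δx/2 := min_le_left _ _
    have h2' : (0:ℝ) < min (δx/2) (1/4) := lt_min (by linarith) (by norm_num)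
    have h3' : min (δx/2) (1/4) ≤ 1/4 := min_le_right _ _
    apply hxreg _ ⟨h2'.le, by linarith⟩
    rw [sub_zero, abs_of_nonneg h2'.le]
    linarith
  have hs0mem : s0 ∈ Icc (0:ℝ) 1 := ⟨hs0pos.le, by linarith⟩
  obtain ⟨b1, hb1ge, hb1lt, hyreg⟩ :
      ∃ b1 : ℝ, 1/2 ≤ b1 ∧ b1 < 1 ∧ ∀ t ∈ Icc (0:ℝ) 1, b1 ≤ t → dist (γ t) y = f t := by
    refine ⟨1 - min (δy/2) (1/2), ?_, ?_, ?_⟩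
    · have : min (δy/2) (1/2) ≤ 1/2 := min_le_right _ _
      linarith
    · have : (0:ℝ) < min (δy/2) (1/2) := lt_min (by linarith) (by norm_num)
      linarith
    · intro t ht hbt
      apply hyreg0 t ht
      rw [abs_of_nonpos (by linarith [ht.2])]
      have h2' : min (δy/2) (1/2) ≤ δy/2 := min_le_left _ _
      have : 1 - t ≤ min (δy/2) (1/2) := by linarith
      linarith
  have hs0b1 : s0 ≤ b1 := by linarith
  -- minimum of f on [s0, b1]
  obtain ⟨c0, hc0, hc0le⟩ : ∃ c0 : ℝ, 0 < c0 ∧ ∀ t ∈ Icc s0 b1, c0 ≤ f t := by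
    obtain ⟨tm, htm, htmin⟩ := isCompact_Icc.exists_isMinOn (nonempty_Icc.mpr hs0b1)
      (hfc.mono (fun z hz => ⟨hs0pos.le.trans hz.1, hz.2.trans hb1lt.le⟩))
    exact ⟨f tm, hfpos tm ⟨lt_of_lt_of_le hs0pos htm.1, lt_of_le_of_lt htm.2 hb1lt⟩,
      fun t ht => htmin ht⟩
  -- main induction
  have main : ∀ n : ℕ, ∀ s', s0 ≤ s' → s' < 1 →
      variationOnFromTo γ (Icc 0 1) s' 1 ≤ n * (c0/2) →
      ∃ (k : ℕ) (t : ℕ → ℝ), t 0 = s' ∧ (∀ i j, i ≤ j → j ≤ k → t i ≤ t j) ∧ t k < 1 ∧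
        dist (γ (t k)) y = f (t k) ∧
        ∀ i, 1 ≤ i → i ≤ k → variationOnFromTo γ (Icc 0 1) (t (i-1)) (t i) =
          (f (t (i-1)) + f (t i))/2 := by
    intro n
    induction n with
    | zero =>
        intro s' hss0 hs1 hV
        have hs'mem : s' ∈ Icc (0:ℝ) 1 := ⟨hs0pos.le.trans hss0, hs1.le⟩
        by_cases hyn : dist (γ s') y = f s'
        · exact ⟨0, fun _ => s', rfl, fun i j _ _ => le_rfl, hs1, hyn,
            fun i h1' h0' => absurd (h1'.trans h0') (by norm_num)⟩
        · exfalso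
          have hsb1 : s' ≤ b1 := by
            by_contra hgt
            push_neg at hgt
            exact hyn (hyreg s' hs'mem hgt.le)
          have hfs' : c0 ≤ f s' := hc0le s' ⟨hss0, hsb1⟩
          have hd : dist (γ s') y ≤ variationOnFromTo γ (Icc 0 1) s' 1 := by
            have := hdistV s' 1 hs'mem h1mem hs1.le
            rwa [h1] at this
          have := hfley s'
          simp only [Nat.cast_zero, zero_mul] at hV
          linarith
    | succ n ih =>
        intro s' hss0 hs1 hV
        have hs'mem : s' ∈ Icc (0:ℝ) 1 := ⟨hs0pos.le.trans hss0, hs1.le⟩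
        by_cases hyn : dist (γ s') y = f s'
        · exact ⟨0, fun _ => s', rfl, fun i j _ _ => le_rfl, hs1, hyn,
            fun i h1' h0' => absurd (h1'.trans h0') (by norm_num)⟩
        · have hsb1 : s' ≤ b1 := by
            by_contra hgt
            push_neg at hgt
            exact hyn (hyreg s' hs'mem hgt.le)
          have hfs' : c0 ≤ f s' := hc0le s' ⟨hss0, hsb1⟩
          set φ : ℝ → ℝ := fun t => (v t - v s') - (f s' + f t)/2 with hφ
          have hφcont : ContinuousOn φ (Icc (0:ℝ) 1) :=
            ((hvc.sub continuousOn_const).sub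
              ((continuousOn_const.add hfc).div_const 2))
          have hφs' : φ s' = -f s' := by simp only [hφ]; ring
          have hφ1 : 0 < φ 1 := by
            have hd : dist (γ s') y ≤ variationOnFromTo γ (Icc 0 1) s' 1 := by
              have := hdistV s' 1 hs'mem h1mem hs1.le
              rwa [h1] at this
            have hV1 : variationOnFromTo γ (Icc 0 1) s' 1 = v 1 - v s' :=
              hVeq 1 h1mem s' hs'mem
            have := hfley s'
            simp only [hφ, hf1]
            linarith
          -- pick tp < 1 with φ tp > 0
          have hne : (𝓝[Ico s' 1] (1:ℝ)).NeBot := by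
            rw [← mem_closure_iff_nhdsWithin_neBot, closure_Ico (ne_of_lt hs1)]
            exact ⟨hs1.le, le_rfl⟩
          have htd : Filter.Tendsto φ (𝓝[Ico s' 1] (1:ℝ)) (𝓝 (φ 1)) :=
            (hφcont 1 h1mem).mono (fun z hz => ⟨hs'mem.1.trans hz.1, hz.2.le⟩)
          obtain ⟨tp, hφtp, htp⟩ :=
            ((htd.eventually (eventually_gt_nhds hφ1)).and eventually_mem_nhdsWithin).exists
          have hivt := intermediate_value_Icc htp.1
            (hφcont.mono (fun z hz => ⟨hs'mem.1.trans hz.1, hz.2.trans htp.2.le⟩))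
          obtain ⟨c, hcmem, hφc⟩ := hivt (show (0:ℝ) ∈ Icc (φ s') (φ tp) from
            ⟨by rw [hφs']; linarith, hφtp.le⟩)
          have hcs' : s' ≤ c := hcmem.1
          have hc1 : c < 1 := lt_of_le_of_lt hcmem.2 htp.2
          have hcmemI : c ∈ Icc (0:ℝ) 1 := ⟨hs'mem.1.trans hcs', hc1.le⟩
          have hVsc : variationOnFromTo γ (Icc 0 1) s' c = (f s' + f c)/2 := by
            rw [hVeq c hcmemI s' hs'mem]
            simp only [hφ] at hφc
            linarith
          have hVc1 : variationOnFromTo γ (Icc 0 1) c 1 ≤ n * (c0/2) := by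
            have hadd := hVadd s' c 1 hs'mem hcmemI h1mem
            have hfc' := hfnn c
            push_cast at hV
            linarith
          obtain ⟨k', t', ht'0, ht'mono, ht'k, ht'y, ht'seg⟩ :=
            ih c (hss0.trans hcs') hc1 hVc1
          refine ⟨k'+1, fun i => if i = 0 then s' else t' (i-1), by simp, ?_, ?_, ?_, ?_⟩
          · intro i j hij hjk
            by_cases hi : i = 0
            · subst hi
              by_cases hj : j = 0
              · subst hj; simp
              · simp only [if_neg hj, if_pos rfl]
                calc s' ≤ c := hcs'
                  _ = t' 0 := ht'0.symm
                  _ ≤ t' (j-1) := ht'mono 0 (j-1) (Nat.zero_le _) (by omega)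
            · have hj : j ≠ 0 := by omega
              simp only [if_neg hi, if_neg hj]
              exact ht'mono (i-1) (j-1) (by omega) (by omega)
          · simp only [Nat.succ_ne_zero, if_neg, Nat.add_sub_cancel]
            exact ht'k
          · simp only [Nat.succ_ne_zero, if_neg, Nat.add_sub_cancel]
            exact ht'y
          · intro i hi1 hik
            by_cases hi : i = 1
            · subst hi
              simp only [Nat.sub_self, if_pos rfl, if_neg one_ne_zero, ht'0]
              exact hVsc
            · have hi2 : 2 ≤ i := by omega
              have him1 : i - 1 ≠ 0 := by omega
              simp only [if_neg him1, if_neg (show i ≠ 0 by omega)]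
              have := ht'seg (i-1) (by omega) (by omega)
              convert this using 3 <;> omega
  -- conclude
  set N : ℕ := ⌈(variationOnFromTo γ (Icc 0 1) s0 1) / (c0/2)⌉₊ with hN
  have hVN : variationOnFromTo γ (Icc 0 1) s0 1 ≤ N * (c0/2) := by
    have h := Nat.le_ceil ((variationOnFromTo γ (Icc 0 1) s0 1) / (c0/2))
    calc variationOnFromTo γ (Icc 0 1) s0 1
        = ((variationOnFromTo γ (Icc 0 1) s0 1)/(c0/2)) * (c0/2) := by
          field_simp
      _ ≤ N * (c0/2) := mul_le_mul_of_nonneg_right h (by positivity)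
  obtain ⟨k, t, ht0, htmono, htk, hty, htseg⟩ := main N s0 le_rfl (by linarith) hVN
  refine ⟨k, t, htmono, by rw [ht0]; exact hs0pos, htk, ?_, hty, htseg⟩
  rw [ht0]
  exact hs0x
end

section
/- Let P = {p₁, …, p_n} be a set of points in ℝ^d, let γ be a piecewise-differentiable curve in ℝ^d with an endpoint x, and suppose the Euclidean length of γ is ℓ(γ) = s. Then the nearest neighbor length of γ satisfies ℓ_N(γ) ≥ s·dnn(x) − s²/2. -/
variable {E : Type*} [NormedAddCommGroup E] [NormedSpace ℝ E]

open MeasureTheory Set intervalIntegral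

private lemma norm_sub_le_integral_norm_deriv {d : ℕ} (F : Finset ℝ)
    (γ : ℝ → EuclideanSpace ℝ (Fin d)) :
    ∀ a b : ℝ, a ≤ b → ContinuousOn γ (Set.Icc a b) →
      (∀ t ∈ Set.Ioo a b, t ∉ F → DifferentiableAt ℝ γ t) →
      IntervalIntegrable (fun t => ‖deriv γ t‖) volume a b →
      ‖γ b - γ a‖ ≤ ∫ t in a..b, ‖deriv γ t‖ := by
  classical
  induction F using Finset.induction with
  | empty =>
    intro a b hab hcont hdiff hint
    have hmeas : AEStronglyMeasurable (deriv γ) (volume.restrict (Set.uIoc a b)) :=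
      (stronglyMeasurable_deriv γ).aestronglyMeasurable.restrict
    have hint' : IntervalIntegrable (deriv γ) volume a b :=
      hint.mono_fun hmeas (by filter_upwards with t; simp)
    have heq : ∫ t in a..b, deriv γ t = γ b - γ a := by
      apply integral_eq_sub_of_hasDeriv_right
      · rwa [Set.uIcc_of_le hab]
      · intro t ht
        rw [min_eq_left hab, max_eq_right hab] at ht
        exact ((hdiff t ht (by simp)).hasDerivAt).hasDerivWithinAt
      · exact hint'
    calc ‖γ b - γ a‖ = ‖∫ t in a..b, deriv γ t‖ := by rw [heq]
      _ ≤ ∫ t in a..b, ‖deriv γ t‖ := norm_integral_le_integral_norm hab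
  | @insert c F hc IH =>
    intro a b hab hcont hdiff hint
    by_cases hcab : c ∈ Set.Ioo a b
    · have hac : a ≤ c := hcab.1.le
      have hcb : c ≤ b := hcab.2.le
      have hsub1 : Set.uIcc a c ⊆ Set.uIcc a b := by
        rw [Set.uIcc_of_le hab, Set.uIcc_of_le hac]
        exact Set.Icc_subset_Icc le_rfl hcb
      have hsub2 : Set.uIcc c b ⊆ Set.uIcc a b := by
        rw [Set.uIcc_of_le hab, Set.uIcc_of_le hcb]
        exact Set.Icc_subset_Icc hac le_rfl
      have h1 : ‖γ c - γ a‖ ≤ ∫ t in a..c, ‖deriv γ t‖ := by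
        refine IH a c hac (hcont.mono (Set.Icc_subset_Icc le_rfl hcb)) ?_ (hint.mono_set hsub1)
        intro t ht htF
        refine hdiff t ⟨ht.1, ht.2.trans hcab.2⟩ ?_
        simp only [Finset.mem_insert, not_or]
        exact ⟨ne_of_lt ht.2, htF⟩
      have h2 : ‖γ b - γ c‖ ≤ ∫ t in c..b, ‖deriv γ t‖ := by
        refine IH c b hcb (hcont.mono (Set.Icc_subset_Icc hac le_rfl)) ?_ (hint.mono_set hsub2)
        intro t ht htF
        refine hdiff t ⟨hcab.1.trans ht.1, ht.2⟩ ?_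
        simp only [Finset.mem_insert, not_or]
        exact ⟨(ne_of_lt ht.1).symm, htF⟩
      have hadd : (∫ t in a..c, ‖deriv γ t‖) + ∫ t in c..b, ‖deriv γ t‖
          = ∫ t in a..b, ‖deriv γ t‖ :=
        integral_add_adjacent_intervals (hint.mono_set hsub1) (hint.mono_set hsub2)
      have htri : ‖γ b - γ a‖ ≤ ‖γ c - γ a‖ + ‖γ b - γ c‖ := by
        have := norm_sub_le_norm_sub_add_norm_sub (γ b) (γ c) (γ a)
        linarith [this, norm_sub_rev (γ b) (γ c)]
      linarith
    · refine IH a b hab hcont ?_ hint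
      intro t ht htF
      refine hdiff t ht ?_
      simp only [Finset.mem_insert, not_or]
      exact ⟨fun h => hcab (h ▸ ht), htF⟩


private lemma integral_primitive_mul (g : ℝ → ℝ) (hg : IntervalIntegrable g volume 0 1)
    (h0 : ∀ t, 0 ≤ g t) :
    ∫ t in (0:ℝ)..1, (∫ u in (0:ℝ)..t, g u) * g t = (∫ t in (0:ℝ)..1, g t) ^ 2 / 2 := by
  set L : ℝ → ℝ := fun t => ∫ u in (0:ℝ)..t, g u with hLdef
  set s : ℝ := ∫ t in (0:ℝ)..1, g t with hsdef
  have hsub : ∀ a b : ℝ, a ∈ Set.Icc (0:ℝ) 1 → b ∈ Set.Icc (0:ℝ) 1 →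
      IntervalIntegrable g volume a b := by
    intro a b ha hb
    refine hg.mono_set ?_
    rw [← Set.uIcc_of_le (zero_le_one' ℝ)] at ha hb
    exact Set.uIcc_subset_uIcc ha hb
  have hmem0 : (0:ℝ) ∈ Set.Icc (0:ℝ) 1 := Set.left_mem_Icc.2 zero_le_one
  have hmem1 : (1:ℝ) ∈ Set.Icc (0:ℝ) 1 := Set.right_mem_Icc.2 zero_le_one
  have hLadd : ∀ a b : ℝ, a ∈ Set.Icc (0:ℝ) 1 → b ∈ Set.Icc (0:ℝ) 1 →
      L b - L a = ∫ u in a..b, g u := by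
    intro a b ha hb
    have h := integral_add_adjacent_intervals (hsub 0 a hmem0 ha) (hsub a b ha hb)
    simp only [hLdef]
    linarith
  have hLmono : ∀ a b : ℝ, a ∈ Set.Icc (0:ℝ) 1 → b ∈ Set.Icc (0:ℝ) 1 → a ≤ b →
      L a ≤ L b := by
    intro a b ha hb hab
    have h1 : (0:ℝ) ≤ ∫ u in a..b, g u := integral_nonneg hab fun u _ => h0 u
    have := hLadd a b ha hb
    linarith
  have hL0 : L 0 = 0 := integral_same
  have hL1 : L 1 = s := rfl
  have hs0 : (0:ℝ) ≤ s := integral_nonneg zero_le_one fun u _ => h0 u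
  have hgIcc : IntegrableOn g (Set.uIcc (0:ℝ) 1) volume := by
    rw [Set.uIcc_of_le (zero_le_one' ℝ)]
    exact (intervalIntegrable_iff_integrableOn_Icc_of_le zero_le_one).1 hg
  have hLcont : ContinuousOn L (Set.Icc (0:ℝ) 1) := by
    have := intervalIntegral.continuousOn_primitive_interval (a := 0) (b := 1) hgIcc
    rwa [Set.uIcc_of_le (zero_le_one' ℝ)] at this
  have hUC := isCompact_Icc.uniformContinuousOn_of_continuous hLcont
  have key : ∀ ε : ℝ, 0 < ε → |(∫ t in (0:ℝ)..1, L t * g t) - s ^ 2 / 2| ≤ ε := by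
    intro ε hε
    set ε' : ℝ := ε / (s + 1) with hε'def
    have hε' : 0 < ε' := div_pos hε (by linarith)
    obtain ⟨δ, hδ, hδ'⟩ := Metric.uniformContinuousOn_iff.mp hUC ε' hε'
    obtain ⟨n, hn⟩ := exists_nat_gt (1 / δ)
    have h1δ : 0 < 1 / δ := by positivity
    have hn0 : 0 < (n : ℝ) := h1δ.trans hn
    have hn0' : (n : ℝ) ≠ 0 := hn0.ne'
    set p : ℕ → ℝ := fun i => (i : ℝ) / n with hpdef
    have hp0 : p 0 = 0 := by simp [hpdef]
    have hpn : p n = 1 := by simp [hpdef, div_self hn0']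
    have hpmem : ∀ i, i ≤ n → p i ∈ Set.Icc (0:ℝ) 1 := by
      intro i hi
      constructor
      · positivity
      · rw [div_le_one hn0]; exact_mod_cast hi
    have hple : ∀ i : ℕ, p i ≤ p (i + 1) := by
      intro i
      simp only [hpdef]
      gcongr
      push_cast
      linarith
    have hpstep : ∀ i : ℕ, p (i + 1) - p i = 1 / n := by
      intro i
      simp only [hpdef]
      push_cast
      ring
    have hdist : ∀ i : ℕ, dist (p (i + 1)) (p i) < δ := by
      intro i
      rw [Real.dist_eq, abs_of_nonneg (by linarith [hple i]), hpstep i, div_lt_iff₀ hn0]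
      rw [div_lt_iff₀ hδ] at hn
      nlinarith
    have hLd : ∀ i, i < n → L (p (i + 1)) - L (p i) ≤ ε' := by
      intro i hi
      have h := hδ' (p (i + 1)) (hpmem _ hi) (p i) (hpmem _ hi.le) (hdist i)
      rw [Real.dist_eq] at h
      calc L (p (i + 1)) - L (p i) ≤ |L (p (i + 1)) - L (p i)| := le_abs_self _
        _ ≤ ε' := h.le
    have hsubIcc : ∀ i, i < n → Set.uIcc (p i) (p (i + 1)) ⊆ Set.Icc (0:ℝ) 1 := by
      intro i hi
      rw [Set.uIcc_of_le (hple i)]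
      exact Set.Icc_subset_Icc (hpmem i hi.le).1 (hpmem (i + 1) hi).2
    have hpieceInt : ∀ i, i < n →
        IntervalIntegrable (fun t => L t * g t) volume (p i) (p (i + 1)) := by
      intro i hi
      exact (hsub _ _ (hpmem i hi.le) (hpmem _ hi)).continuousOn_mul
        (hLcont.mono (hsubIcc i hi))
    have hsplit : ∑ i ∈ Finset.range n, ∫ t in p i..p (i + 1), L t * g t
        = ∫ t in (0:ℝ)..1, L t * g t := by
      have h := intervalIntegral.sum_integral_adjacent_intervals (a := p) (n := n)
        (fun i hi => hpieceInt i hi)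
      rwa [hp0, hpn] at h
    have htel : ∑ i ∈ Finset.range n, (L (p (i + 1)) ^ 2 / 2 - L (p i) ^ 2 / 2)
        = s ^ 2 / 2 := by
      rw [Finset.sum_range_sub (fun i => L (p i) ^ 2 / 2), hpn, hp0, hL1, hL0]
      norm_num
    have htelL : ∑ i ∈ Finset.range n, (L (p (i + 1)) - L (p i)) = s := by
      rw [Finset.sum_range_sub (fun i => L (p i)), hpn, hp0, hL1, hL0, sub_zero]
    have hbound : ∀ i ∈ Finset.range n,
        |(∫ t in p i..p (i + 1), L t * g t) - (L (p (i + 1)) ^ 2 / 2 - L (p i) ^ 2 / 2)|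
          ≤ ε' * (L (p (i + 1)) - L (p i)) / 2 := by
      intro i hi
      rw [Finset.mem_range] at hi
      have hab : p i ≤ p (i + 1) := hple i
      have hma := hpmem i hi.le
      have hmb := hpmem (i + 1) hi
      have hgint : IntervalIntegrable g volume (p i) (p (i + 1)) := hsub _ _ hma hmb
      have hΔeq : L (p (i + 1)) - L (p i) = ∫ u in p i..p (i + 1), g u := hLadd _ _ hma hmb
      have hup : (∫ t in p i..p (i + 1), L t * g t)
          ≤ L (p (i + 1)) * (L (p (i + 1)) - L (p i)) := by
        have h1 : (∫ t in p i..p (i + 1), L t * g t)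
            ≤ ∫ t in p i..p (i + 1), L (p (i + 1)) * g t := by
          refine integral_mono_on hab (hpieceInt i hi) (hgint.const_mul _) ?_
          intro t ht
          have htmem : t ∈ Set.Icc (0:ℝ) 1 := ⟨hma.1.trans ht.1, ht.2.trans hmb.2⟩
          exact mul_le_mul_of_nonneg_right (hLmono t _ htmem hmb ht.2) (h0 t)
        rwa [intervalIntegral.integral_const_mul, ← hΔeq] at h1
      have hlo : L (p i) * (L (p (i + 1)) - L (p i))
          ≤ ∫ t in p i..p (i + 1), L t * g t := by
        have h1 : (∫ t in p i..p (i + 1), L (p i) * g t)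
            ≤ ∫ t in p i..p (i + 1), L t * g t := by
          refine integral_mono_on hab (hgint.const_mul _) (hpieceInt i hi) ?_
          intro t ht
          have htmem : t ∈ Set.Icc (0:ℝ) 1 := ⟨hma.1.trans ht.1, ht.2.trans hmb.2⟩
          exact mul_le_mul_of_nonneg_right (hLmono _ t hma htmem ht.1) (h0 t)
        rwa [intervalIntegral.integral_const_mul, ← hΔeq] at h1
      have hΔnn : 0 ≤ L (p (i + 1)) - L (p i) :=
        sub_nonneg.2 (hLmono _ _ hma hmb hab)
      have hΔε : L (p (i + 1)) - L (p i) ≤ ε' := hLd i hi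
      rw [abs_le]
      constructor
      · nlinarith [mul_nonneg hΔnn (sub_nonneg.2 hΔε)]
      · nlinarith [mul_nonneg hΔnn (sub_nonneg.2 hΔε)]
    have hfinal : |(∫ t in (0:ℝ)..1, L t * g t) - s ^ 2 / 2| ≤ ε' * s / 2 := by
      calc |(∫ t in (0:ℝ)..1, L t * g t) - s ^ 2 / 2|
          = |∑ i ∈ Finset.range n, ((∫ t in p i..p (i + 1), L t * g t)
              - (L (p (i + 1)) ^ 2 / 2 - L (p i) ^ 2 / 2))| := by
            rw [Finset.sum_sub_distrib, hsplit, htel]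
        _ ≤ ∑ i ∈ Finset.range n, |(∫ t in p i..p (i + 1), L t * g t)
              - (L (p (i + 1)) ^ 2 / 2 - L (p i) ^ 2 / 2)| :=
            Finset.abs_sum_le_sum_abs _ _
        _ ≤ ∑ i ∈ Finset.range n, ε' * (L (p (i + 1)) - L (p i)) / 2 :=
            Finset.sum_le_sum hbound
        _ = ε' * s / 2 := by
            rw [show (∑ i ∈ Finset.range n, ε' * (L (p (i + 1)) - L (p i)) / 2)
                = ε' * (∑ i ∈ Finset.range n, (L (p (i + 1)) - L (p i))) / 2 by
              rw [Finset.mul_sum, Finset.sum_div], htelL]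
    have hεs : ε' * s / 2 ≤ ε := by
      have h1 : ε' * s ≤ ε' * (s + 1) := by nlinarith
      have h2 : ε' * (s + 1) = ε := div_mul_cancel₀ ε (by linarith)
      nlinarith
    linarith
  have habs : |(∫ t in (0:ℝ)..1, L t * g t) - s ^ 2 / 2| ≤ 0 := by
    by_contra h
    push_neg at h
    have := key (|(∫ t in (0:ℝ)..1, L t * g t) - s ^ 2 / 2| / 2) (by linarith)
    linarith
  have h0' := abs_nonneg ((∫ t in (0:ℝ)..1, L t * g t) - s ^ 2 / 2)
  have : (∫ t in (0:ℝ)..1, L t * g t) - s ^ 2 / 2 = 0 :=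
    abs_eq_zero.mp (le_antisymm habs h0')
  linarith

/-- If a piecewise-differentiable curve `γ` has an endpoint `x` and
Euclidean length `s`, then `ℓ_N(γ) ≥ s·dnn(x) − s²/2`. -/
theorem nnLength_ge_of_length {d : ℕ} (P : Finset (EuclideanSpace ℝ (Fin d)))
    (γ : ℝ → EuclideanSpace ℝ (Fin d)) (x : EuclideanSpace ℝ (Fin d))
    (hγ : PiecewiseDiff γ) (hx : γ 0 = x ∨ γ 1 = x) (s : ℝ) (hs : euclLength γ = s) :
    nnLength (P : Set (EuclideanSpace ℝ (Fin d))) γ ≥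
      s * dnn (P : Set (EuclideanSpace ℝ (Fin d))) x - s ^ 2 / 2 := by
  classical
  set Q : Set (EuclideanSpace ℝ (Fin d)) := (P : Set (EuclideanSpace ℝ (Fin d))) with hQdef
  set g : ℝ → ℝ := fun t => ‖deriv γ t‖ with hgdef
  have hg0 : ∀ t, 0 ≤ g t := fun t => norm_nonneg _
  have hnnL : nnLength Q γ = ∫ t in (0:ℝ)..1, dnn Q (γ t) * g t := rfl
  have heL : euclLength γ = ∫ t in (0:ℝ)..1, g t := rfl
  by_cases hint : IntervalIntegrable g volume 0 1
  · -- main case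
    have hsint : ∫ t in (0:ℝ)..1, g t = s := by rw [← heL, hs]
    have hs0 : (0:ℝ) ≤ s := by
      rw [← hsint]; exact integral_nonneg zero_le_one fun u _ => hg0 u
    set L : ℝ → ℝ := fun t => ∫ u in (0:ℝ)..t, g u with hLdef
    have hsub : ∀ a b : ℝ, a ∈ Set.Icc (0:ℝ) 1 → b ∈ Set.Icc (0:ℝ) 1 →
        IntervalIntegrable g volume a b := by
      intro a b ha hb
      refine hint.mono_set ?_
      rw [← Set.uIcc_of_le (zero_le_one' ℝ)] at ha hb
      exact Set.uIcc_subset_uIcc ha hb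
    have hmem0 : (0:ℝ) ∈ Set.Icc (0:ℝ) 1 := Set.left_mem_Icc.2 zero_le_one
    have hmem1 : (1:ℝ) ∈ Set.Icc (0:ℝ) 1 := Set.right_mem_Icc.2 zero_le_one
    have hgIcc : IntegrableOn g (Set.uIcc (0:ℝ) 1) volume := by
      rw [Set.uIcc_of_le (zero_le_one' ℝ)]
      exact (intervalIntegrable_iff_integrableOn_Icc_of_le zero_le_one).1 hint
    have hLcont : ContinuousOn L (Set.Icc (0:ℝ) 1) := by
      have := intervalIntegral.continuousOn_primitive_interval (a := 0) (b := 1) hgIcc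
      rwa [Set.uIcc_of_le (zero_le_one' ℝ)] at this
    have hLg : ∫ t in (0:ℝ)..1, L t * g t = s ^ 2 / 2 := by
      rw [hLdef]
      rw [integral_primitive_mul g hint hg0, hsint]
    obtain ⟨F, hF⟩ := hγ.2
    -- produce W
    obtain ⟨W, hWcont, hWle, hWg⟩ :
        ∃ W : ℝ → ℝ, ContinuousOn W (Set.Icc (0:ℝ) 1) ∧
          (∀ t ∈ Set.Icc (0:ℝ) 1, dnn Q x - dnn Q (γ t) ≤ W t) ∧
          (∫ t in (0:ℝ)..1, W t * g t) = s ^ 2 / 2 := by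
      rcases hx with hx0 | hx1
      · refine ⟨L, hLcont, ?_, hLg⟩
        intro t ht
        have h1 : dnn Q x ≤ dnn Q (γ t) + dist x (γ t) :=
          Metric.infDist_le_infDist_add_dist
        have h2 : dist x (γ t) = ‖γ t - γ 0‖ := by
          rw [← hx0, dist_comm, dist_eq_norm]
        have h3 : ‖γ t - γ 0‖ ≤ ∫ u in (0:ℝ)..t, g u := by
          refine norm_sub_le_integral_norm_deriv F γ 0 t ht.1
            (hγ.1.mono (Set.Icc_subset_Icc le_rfl ht.2)) ?_
            (hsub 0 t hmem0 ht)
          intro u hu huF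
          exact hF u ⟨⟨hu.1.le, hu.2.le.trans ht.2⟩, huF⟩
        have h3' : ‖γ t - γ 0‖ ≤ L t := h3
        rw [h2] at h1
        linarith
      · refine ⟨fun t => s - L t, (continuousOn_const.sub hLcont), ?_, ?_⟩
        · intro t ht
          have h1 : dnn Q x ≤ dnn Q (γ t) + dist x (γ t) :=
            Metric.infDist_le_infDist_add_dist
          have h2 : dist x (γ t) = ‖γ 1 - γ t‖ := by
            rw [← hx1, dist_comm, dist_eq_norm, norm_sub_rev]
          have h3 : ‖γ 1 - γ t‖ ≤ ∫ u in t..1, g u := by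
            refine norm_sub_le_integral_norm_deriv F γ t 1 ht.2
              (hγ.1.mono (Set.Icc_subset_Icc ht.1 le_rfl)) ?_
              (hsub t 1 ht hmem1)
            intro u hu huF
            exact hF u ⟨⟨ht.1.trans hu.1.le, hu.2.le⟩, huF⟩
          have h4 : (∫ u in t..1, g u) = s - L t := by
            have h := integral_add_adjacent_intervals (hsub 0 t hmem0 ht) (hsub t 1 ht hmem1)
            rw [hsint] at h
            simp only [hLdef]
            linarith
          show dnn Q x - dnn Q (γ t) ≤ s - L t
          rw [h2] at h1
          rw [h4] at h3
          linarith
        · have hint1 : IntervalIntegrable (fun t => s * g t) volume 0 1 := hint.const_mul s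
          have hint2 : IntervalIntegrable (fun t => L t * g t) volume 0 1 :=
            hint.continuousOn_mul (by rwa [Set.uIcc_of_le (zero_le_one' ℝ)])
          have : (fun t => (s - L t) * g t) = fun t => s * g t - L t * g t := by
            funext t; ring
          rw [this, integral_sub hint1 hint2, intervalIntegral.integral_const_mul, hsint, hLg]
          ring
    -- final computation
    have hWgint : IntervalIntegrable (fun t => W t * g t) volume 0 1 :=
      hint.continuousOn_mul (by rwa [Set.uIcc_of_le (zero_le_one' ℝ)])
    have hdnncont : ContinuousOn (fun t => dnn Q (γ t)) (Set.Icc (0:ℝ) 1) :=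
      (Metric.continuous_infDist_pt Q).comp_continuousOn hγ.1
    have hdnnint : IntervalIntegrable (fun t => dnn Q (γ t) * g t) volume 0 1 :=
      hint.continuousOn_mul (by rwa [Set.uIcc_of_le (zero_le_one' ℝ)])
    have hRint : IntervalIntegrable (fun t => (dnn Q x - W t) * g t) volume 0 1 := by
      refine hint.continuousOn_mul ?_
      rw [Set.uIcc_of_le (zero_le_one' ℝ)]
      exact continuousOn_const.sub hWcont
    have hmono : (∫ t in (0:ℝ)..1, (dnn Q x - W t) * g t)
        ≤ ∫ t in (0:ℝ)..1, dnn Q (γ t) * g t := by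
      refine integral_mono_on zero_le_one hRint hdnnint ?_
      intro t ht
      have := hWle t ht
      exact mul_le_mul_of_nonneg_right (by linarith) (hg0 t)
    have heval : (∫ t in (0:ℝ)..1, (dnn Q x - W t) * g t) = dnn Q x * s - s ^ 2 / 2 := by
      have h1 : (fun t => (dnn Q x - W t) * g t)
          = fun t => dnn Q x * g t - W t * g t := by funext t; ring
      rw [h1, integral_sub (hint.const_mul _) hWgint, intervalIntegral.integral_const_mul, hsint, hWg]
    rw [ge_iff_le, hnnL]
    calc s * dnn Q x - s ^ 2 / 2 = dnn Q x * s - s ^ 2 / 2 := by ring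
      _ = ∫ t in (0:ℝ)..1, (dnn Q x - W t) * g t := heval.symm
      _ ≤ ∫ t in (0:ℝ)..1, dnn Q (γ t) * g t := hmono
  · -- degenerate case: s = 0
    have hs0 : s = 0 := by
      rw [← hs, heL, intervalIntegral.integral_undef hint]
    have hnn : (0:ℝ) ≤ nnLength Q γ := by
      rw [hnnL]
      refine integral_nonneg zero_le_one ?_
      intro u _
      exact mul_nonneg Metric.infDist_nonneg (hg0 u)
    rw [hs0]
    simpa using hnn
end

section
/- Let P be a finite set of points in ℝ^d and let γ be a piecewise-differentiable curve with endpoints a and b whose Euclidean length satisfies ℓ(γ) = (dnn(a) + dnn(b))/2 = 2s, where s = (dnn(a) + dnn(b))/4. Then the nearest neighbor length of γ satisfies ℓ_N(γ) ≥ 3s². -/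
variable {E : Type*} [NormedAddCommGroup E] [NormedSpace ℝ E]

open MeasureTheory Set intervalIntegral

/-- Auxiliary Fubini-type identity: for nonnegative (actually arbitrary integrable) `g`,
`∫ (∫ g) g = (∫ g)²/2`. -/
lemma key_fubini (g : ℝ → ℝ) {α β : ℝ} (hαβ : α ≤ β)
    (hint : IntegrableOn g (Set.Ioc α β)) :
    ∫ t in α..β, (∫ s in α..t, g s) * g t = (∫ s in α..β, g s) ^ 2 / 2 := by
  set ν := volume.restrict (Set.Ioc α β) with hν
  have hgν : Integrable g ν := hint
  set q : ℝ × ℝ → ℝ := fun p => g p.1 * g p.2 with hq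
  have hqint : Integrable q (ν.prod ν) := hgν.mul_prod hgν
  have hD : MeasurableSet {p : ℝ × ℝ | p.2 ≤ p.1} :=
    (isClosed_le continuous_snd continuous_fst).measurableSet
  have hD' : MeasurableSet {p : ℝ × ℝ | p.1 ≤ p.2} :=
    (isClosed_le continuous_fst continuous_snd).measurableSet
  set F : ℝ × ℝ → ℝ := fun p => if p.2 ≤ p.1 then g p.1 * g p.2 else 0 with hFdef
  set G : ℝ × ℝ → ℝ := fun p => if p.1 ≤ p.2 then g p.2 * g p.1 else 0 with hGdef
  have hFind : F = Set.indicator {p : ℝ × ℝ | p.2 ≤ p.1} q := by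
    funext p; simp [hFdef, hq, Set.indicator_apply]
  have hGind : G = Set.indicator {p : ℝ × ℝ | p.1 ≤ p.2} (fun p => g p.2 * g p.1) := by
    funext p; simp [hGdef, Set.indicator_apply]
  have hqint' : Integrable (fun p : ℝ × ℝ => g p.2 * g p.1) (ν.prod ν) := by
    simpa [mul_comm] using hqint
  have hFint : Integrable F (ν.prod ν) := by rw [hFind]; exact hqint.indicator hD
  have hGint : Integrable G (ν.prod ν) := by rw [hGind]; exact hqint'.indicator hD'
  -- Step A : LHS = ∫ F
  have stepA : ∫ t in α..β, (∫ s in α..t, g s) * g t = ∫ p, F p ∂(ν.prod ν) := by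
    have inner : ∀ t ∈ Set.Ioc α β,
        (∫ s in α..t, g s) * g t = ∫ s, F (t, s) ∂ν := by
      intro t ht
      have h1 : ∀ s ∈ Set.Ioc α β, F (t, s) = g t * (Set.Ioc α t).indicator g s := by
        intro s hs
        by_cases h : s ≤ t
        · simp [hFdef, h, Set.indicator_of_mem (Set.mem_Ioc.2 ⟨hs.1, h⟩), mul_comm]
        · simp [hFdef, h, Set.indicator_of_notMem (fun hc => h (Set.mem_Ioc.1 hc).2)]
      rw [setIntegral_congr_fun measurableSet_Ioc h1, MeasureTheory.integral_const_mul,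
        setIntegral_indicator measurableSet_Ioc,
        Set.inter_eq_self_of_subset_right (Set.Ioc_subset_Ioc le_rfl ht.2),
        intervalIntegral.integral_of_le ht.1.le, mul_comm]
    rw [intervalIntegral.integral_of_le hαβ]
    rw [setIntegral_congr_fun measurableSet_Ioc (fun t ht => inner t ht)]
    exact integral_integral (by exact hFint)
  -- Step B : ∫ G = ∫ F
  have stepB : ∫ p, G p ∂(ν.prod ν) = ∫ p, F p ∂(ν.prod ν) := by
    have hswap : G = F ∘ Prod.swap := rfl
    have hmap : (ν.prod ν).map Prod.swap = ν.prod ν := Measure.prod_swap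
    rw [hswap]
    calc ∫ p, (F ∘ Prod.swap) p ∂(ν.prod ν)
        = ∫ p, F p ∂((ν.prod ν).map Prod.swap) :=
          (integral_map measurable_swap.aemeasurable
            (by rw [hmap]; exact hFint.1)).symm
      _ = ∫ p, F p ∂(ν.prod ν) := by rw [hmap]
  -- diagonal is null
  have hdiagm : MeasurableSet {p : ℝ × ℝ | p.1 = p.2} :=
    (isClosed_eq continuous_fst continuous_snd).measurableSet
  have hdiag : (ν.prod ν) {p : ℝ × ℝ | p.1 = p.2} = 0 := by
    rw [Measure.prod_apply hdiagm]
    have : ∀ t : ℝ, ν (Prod.mk t ⁻¹' {p : ℝ × ℝ | p.1 = p.2}) = 0 := by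
      intro t
      have hpre : Prod.mk t ⁻¹' {p : ℝ × ℝ | p.1 = p.2} = {t} := by
        ext s; simp [eq_comm]
      rw [hpre]
      exact le_antisymm (le_trans (Measure.restrict_le_self _) (by simp)) bot_le
    simp [this]
  -- pointwise F + G
  have hFG : ∀ p : ℝ × ℝ, F p + G p =
      q p + ({p : ℝ × ℝ | p.1 = p.2}).indicator q p := by
    intro p
    by_cases h1 : p.2 ≤ p.1 <;> by_cases h2 : p.1 ≤ p.2
    · have he : p.1 = p.2 := le_antisymm h2 h1
      simp [hFdef, hGdef, hq, h1, h2, Set.indicator_of_mem, he, mul_comm]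
    · have he : p.1 ≠ p.2 := fun hc => h2 hc.le
      simp [hFdef, hGdef, hq, h1, h2, Set.indicator_of_notMem, he]
    · have he : p.1 ≠ p.2 := fun hc => h1 hc.ge
      simp [hFdef, hGdef, hq, h1, h2, Set.indicator_of_notMem, he, mul_comm]
    · exact absurd (le_total p.2 p.1) (by simp [h1, h2])
  have hindint : Integrable (({p : ℝ × ℝ | p.1 = p.2}).indicator q) (ν.prod ν) :=
    hqint.indicator hdiagm
  have hsum : ∫ p, F p ∂(ν.prod ν) + ∫ p, G p ∂(ν.prod ν)
      = ∫ p, q p ∂(ν.prod ν) := by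
    rw [← integral_add hFint hGint]
    have : ∫ p, (F p + G p) ∂(ν.prod ν)
        = ∫ p, (q p + ({p : ℝ × ℝ | p.1 = p.2}).indicator q p) ∂(ν.prod ν) :=
      integral_congr_ae (Filter.Eventually.of_forall hFG)
    rw [this, integral_add hqint hindint, MeasureTheory.integral_indicator hdiagm,
      Measure.restrict_eq_zero.2 hdiag, integral_zero_measure, add_zero]
  have hq2 : ∫ p, q p ∂(ν.prod ν) = (∫ s in α..β, g s) ^ 2 := by
    rw [hq]
    rw [integral_prod_mul g g, intervalIntegral.integral_of_le hαβ, sq]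
  rw [stepA]
  rw [stepB] at hsum
  linarith [hsum, hq2]

/-- Auxiliary: a product of a bounded a.e.-strongly-measurable function with a
nonnegative integrable function is integrable. -/
lemma mul_integrableOn_of_bounded {φ g : ℝ → ℝ} {s : Set ℝ} (hs : MeasurableSet s)
    (hφ : AEStronglyMeasurable φ (volume.restrict s)) (hg : IntegrableOn g s)
    (hg0 : ∀ x, 0 ≤ g x) {C : ℝ} (hC : ∀ x ∈ s, |φ x| ≤ C) :
    IntegrableOn (fun x => φ x * g x) s := by
  refine Integrable.mono' (hg.const_mul C) (hφ.mul hg.1) ?_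
  refine (ae_restrict_iff' hs).2 (Filter.Eventually.of_forall fun x hx => ?_)
  have : ‖φ x * g x‖ = |φ x| * g x := by
    rw [Real.norm_eq_abs, abs_mul, abs_of_nonneg (hg0 x)]
  rw [this]
  exact mul_le_mul_of_nonneg_right (hC x hx) (hg0 x)

/-- If a piecewise-differentiable curve `γ` has endpoints `a` and `b`
and Euclidean length `(dnn(a) + dnn(b))/2 = 2s` where `s = (dnn(a) + dnn(b))/4`, then
`ℓ_N(γ) ≥ 3s²`. -/
theorem nnLength_ge_three_s_sq {d : ℕ} (P : Finset (EuclideanSpace ℝ (Fin d)))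
    (γ : ℝ → EuclideanSpace ℝ (Fin d)) (a b : EuclideanSpace ℝ (Fin d))
    (hγ : PiecewiseDiff γ) (ha : γ 0 = a) (hb : γ 1 = b)
    (hlen : euclLength γ =
      (dnn (P : Set (EuclideanSpace ℝ (Fin d))) a +
        dnn (P : Set (EuclideanSpace ℝ (Fin d))) b) / 2) :
    nnLength (P : Set (EuclideanSpace ℝ (Fin d))) γ ≥
      3 * ((dnn (P : Set (EuclideanSpace ℝ (Fin d))) a +
        dnn (P : Set (EuclideanSpace ℝ (Fin d))) b) / 4) ^ 2 := by
  classical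
  obtain ⟨hγc, Fset, hFd⟩ := hγ
  set K : Set (EuclideanSpace ℝ (Fin d)) := (P : Set (EuclideanSpace ℝ (Fin d))) with hK
  set da := dnn K a with hda
  set db := dnn K b with hdb
  set g : ℝ → ℝ := fun t => ‖deriv γ t‖ with hgdef
  have hg0 : ∀ t, 0 ≤ g t := fun t => norm_nonneg _
  have hnn : nnLength K γ = ∫ t in (0:ℝ)..1, dnn K (γ t) * g t := rfl
  have hda0 : 0 ≤ da := Metric.infDist_nonneg
  have hdb0 : 0 ≤ db := Metric.infDist_nonneg
  by_cases hInt : IntervalIntegrable g volume 0 1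
  swap
  · -- degenerate case : the length integral is zero
    have h0 : euclLength γ = 0 := intervalIntegral.integral_undef hInt
    have hsum : da + db = 0 := by rw [h0] at hlen; linarith
    have h1 : 0 ≤ nnLength K γ := by
      rw [hnn]
      exact intervalIntegral.integral_nonneg zero_le_one fun u _ =>
        mul_nonneg Metric.infDist_nonneg (hg0 u)
    have h2 : 3 * ((da + db) / 4) ^ 2 = 0 := by rw [hsum]; norm_num
    rw [ge_iff_le, h2]
    exact h1
  -- main case
  have hIntIoc : IntegrableOn g (Set.Ioc 0 1) := hInt.1
  set f : ℝ → ℝ := fun t => ∫ u in (0:ℝ)..t, g u with hfdef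
  have hfc : ContinuousOn f (Set.Icc 0 1) := by
    have h := intervalIntegral.continuousOn_primitive_interval
      (f := g) (μ := volume) (a := (0:ℝ)) (b := 1)
      (by rw [Set.uIcc_of_le zero_le_one]; exact (integrableOn_Icc_iff_integrableOn_Ioc).2 hIntIoc)
    rw [Set.uIcc_of_le zero_le_one] at h
    exact h
  have hf0 : f 0 = 0 := intervalIntegral.integral_same
  have hgsub : ∀ x y, 0 ≤ x → x ≤ y → y ≤ 1 → IntervalIntegrable g volume x y := by
    intro x y hx hxy hy
    apply hInt.mono_set
    rw [Set.uIcc_of_le hxy, Set.uIcc_of_le zero_le_one]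
    exact Set.Icc_subset_Icc hx hy
  have hfadd : ∀ x y, 0 ≤ x → x ≤ y → y ≤ 1 → f y = f x + ∫ u in x..y, g u := by
    intro x y hx hxy hy
    exact (intervalIntegral.integral_add_adjacent_intervals
      (hgsub 0 x le_rfl hx (hxy.trans hy)) (hgsub x y hx hxy hy)).symm
  have hint_nonneg : ∀ x y, x ≤ y → (0:ℝ) ≤ ∫ u in x..y, g u := fun x y hxy =>
    intervalIntegral.integral_nonneg hxy fun u _ => hg0 u
  have hfmono : ∀ x y, 0 ≤ x → x ≤ y → y ≤ 1 → f x ≤ f y := by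
    intro x y hx hxy hy
    rw [hfadd x y hx hxy hy]
    linarith [hint_nonneg x y hxy]
  have hfnn : ∀ t, 0 ≤ t → t ≤ 1 → 0 ≤ f t := by
    intro t h1 h2
    have := hfmono 0 t le_rfl h1 h2
    rw [hf0] at this
    exact this
  set L := f 1 with hL
  have hLval : L = (da + db) / 2 := by rw [← hlen]; rfl
  -- fundamental theorem of calculus bounds
  have hderiv_int : ∀ x y, 0 ≤ x → x ≤ y → y ≤ 1 →
      IntervalIntegrable (deriv γ) volume x y := by
    intro x y hx hxy hy
    rw [intervalIntegrable_iff_integrableOn_Ioc_of_le hxy]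
    have hgon : IntegrableOn g (Set.Ioc x y) :=
      (intervalIntegrable_iff_integrableOn_Ioc_of_le hxy).1 (hgsub x y hx hxy hy)
    exact hgon.mono' (stronglyMeasurable_deriv γ).aestronglyMeasurable
      (Filter.Eventually.of_forall fun t => le_rfl)
  have hseg : ∀ x y, 0 ≤ x → x ≤ y → y ≤ 1 → ‖γ y - γ x‖ ≤ ∫ u in x..y, g u := by
    intro x y hx hxy hy
    have hFTC : ∫ u in x..y, deriv γ u = γ y - γ x := by
      refine MeasureTheory.integral_eq_of_hasDerivAt_off_countable_of_le γ (deriv γ)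
        hxy Fset.countable_toSet (hγc.mono (Set.Icc_subset_Icc hx hy)) ?_
        (hderiv_int x y hx hxy hy)
      intro z hz
      have hz1 : z ∈ Set.Icc (0:ℝ) 1 \ (Fset : Set ℝ) :=
        ⟨⟨hx.trans hz.1.1.le, hz.1.2.le.trans hy⟩, hz.2⟩
      exact (hFd z hz1).hasDerivAt
    calc ‖γ y - γ x‖ = ‖∫ u in x..y, deriv γ u‖ := by rw [hFTC]
      _ ≤ ∫ u in x..y, ‖deriv γ u‖ := intervalIntegral.norm_integral_le_integral_norm hxy
  -- Lipschitz bounds on dnn along the curve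
  have hlow1 : ∀ t ∈ Set.Icc (0:ℝ) 1, da - f t ≤ dnn K (γ t) := by
    intro t ht
    have h1 : da ≤ dnn K (γ t) + dist a (γ t) := Metric.infDist_le_infDist_add_dist
    have h2 : dist a (γ t) ≤ f t := by
      rw [← ha, dist_comm, dist_eq_norm]
      exact hseg 0 t le_rfl ht.1 ht.2
    linarith
  have hlow2 : ∀ t ∈ Set.Icc (0:ℝ) 1, db - L + f t ≤ dnn K (γ t) := by
    intro t ht
    have h1 : db ≤ dnn K (γ t) + dist b (γ t) := Metric.infDist_le_infDist_add_dist
    have h2 : dist b (γ t) ≤ L - f t := by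
      rw [← hb, dist_comm, dist_eq_norm, norm_sub_rev]
      have h3 := hseg t 1 ht.1 ht.2 le_rfl
      have h4 := hfadd t 1 ht.1 ht.2 le_rfl
      rw [hL]
      linarith
    linarith
  have hupp : ∀ t ∈ Set.Icc (0:ℝ) 1, dnn K (γ t) ≤ da + L := by
    intro t ht
    have h1 : dnn K (γ t) ≤ da + dist (γ t) a := Metric.infDist_le_infDist_add_dist
    have h2 : dist (γ t) a ≤ f t := by
      rw [← ha, dist_eq_norm]
      exact hseg 0 t le_rfl ht.1 ht.2
    have h3 := hfmono t 1 ht.1 ht.2 le_rfl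
    rw [hL]
    linarith
  -- distance between endpoints
  have habL : dist a b ≤ L := by
    rw [← ha, ← hb, dist_eq_norm, norm_sub_rev, hL]
    have := hseg 0 1 le_rfl zero_le_one le_rfl
    have hf1 : f 1 = ∫ u in (0:ℝ)..1, g u := rfl
    linarith
  have hd1 : da ≤ db + dist a b := Metric.infDist_le_infDist_add_dist
  have hd2 : db ≤ da + dist b a := Metric.infDist_le_infDist_add_dist
  rw [dist_comm] at hd2
  set ustar := (da - db + L) / 2 with hust
  have hu0 : 0 ≤ ustar := by rw [hust]; linarith
  have huL : ustar ≤ L := by rw [hust]; linarith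
  -- intermediate value: find the crossing time τ
  obtain ⟨τ, hτ, hfτ⟩ : ∃ τ ∈ Set.Icc (0:ℝ) 1, f τ = ustar := by
    have h := intermediate_value_Icc zero_le_one hfc
    have hmem : ustar ∈ f '' Set.Icc 0 1 := by
      apply h
      constructor
      · rw [hf0]; exact hu0
      · rw [← hL]; exact huL
    obtain ⟨τ, h1, h2⟩ := hmem
    exact ⟨τ, h1, h2⟩
  have hτ0 : (0:ℝ) ≤ τ := hτ.1
  have hτ1 : τ ≤ 1 := hτ.2
  -- measurability facts
  have hγm : AEStronglyMeasurable γ (volume.restrict (Set.Icc 0 1)) :=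
    hγc.aestronglyMeasurable measurableSet_Icc
  have hdnnm : AEStronglyMeasurable (fun t => dnn K (γ t)) (volume.restrict (Set.Icc 0 1)) :=
    (Metric.continuous_infDist_pt K).comp_aestronglyMeasurable hγm
  have hfm : AEStronglyMeasurable f (volume.restrict (Set.Icc 0 1)) :=
    hfc.aestronglyMeasurable measurableSet_Icc
  have hmono_meas : ∀ x y : ℝ, 0 ≤ x → y ≤ 1 →
      volume.restrict (Set.Ioc x y) ≤ volume.restrict (Set.Icc 0 1) := by
    intro x y hx hy
    refine Measure.restrict_mono (fun t ht => ?_) le_rfl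
    exact Set.mem_Icc.2 ⟨hx.trans ht.1.le, ht.2.trans hy⟩
  -- integrability of the various integrands
  have hIprod : ∀ x y, 0 ≤ x → x ≤ y → y ≤ 1 →
      IntervalIntegrable (fun t => dnn K (γ t) * g t) volume x y := by
    intro x y hx hxy hy
    rw [intervalIntegrable_iff_integrableOn_Ioc_of_le hxy]
    refine mul_integrableOn_of_bounded measurableSet_Ioc
      (hdnnm.mono_measure (hmono_meas x y hx hy))
      ((intervalIntegrable_iff_integrableOn_Ioc_of_le hxy).1 (hgsub x y hx hxy hy))
      hg0 (C := da + L) ?_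
    intro t ht
    have htI : t ∈ Set.Icc (0:ℝ) 1 := ⟨hx.trans ht.1.le, ht.2.trans hy⟩
    rw [abs_of_nonneg (show (0:ℝ) ≤ dnn K (γ t) from Metric.infDist_nonneg)]
    exact hupp t htI
  have hIf : ∀ x y, 0 ≤ x → x ≤ y → y ≤ 1 →
      IntervalIntegrable (fun t => f t * g t) volume x y := by
    intro x y hx hxy hy
    rw [intervalIntegrable_iff_integrableOn_Ioc_of_le hxy]
    refine mul_integrableOn_of_bounded measurableSet_Ioc
      (hfm.mono_measure (hmono_meas x y hx hy))
      ((intervalIntegrable_iff_integrableOn_Ioc_of_le hxy).1 (hgsub x y hx hxy hy))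
      hg0 (C := L) ?_
    intro t ht
    have ht0 : (0:ℝ) ≤ t := hx.trans ht.1.le
    have ht1 : t ≤ 1 := ht.2.trans hy
    rw [abs_of_nonneg (hfnn t ht0 ht1), hL]
    exact hfmono t 1 ht0 ht1 le_rfl
  -- part 1 : lower bound on [0, τ]
  have hint1a : IntervalIntegrable (fun t => (da - f t) * g t) volume 0 τ := by
    have h1 := (hgsub 0 τ le_rfl hτ0 hτ1).const_mul da
    have h2 := hIf 0 τ le_rfl hτ0 hτ1
    have h3 := h1.sub h2
    simpa [sub_mul] using h3
  have hmono1 : ∫ t in (0:ℝ)..τ, (da - f t) * g t ≤ ∫ t in (0:ℝ)..τ, dnn K (γ t) * g t := by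
    refine intervalIntegral.integral_mono_on hτ0 hint1a (hIprod 0 τ le_rfl hτ0 hτ1) ?_
    intro t ht
    exact mul_le_mul_of_nonneg_right (hlow1 t ⟨ht.1, ht.2.trans hτ1⟩) (hg0 t)
  have hval1 : ∫ t in (0:ℝ)..τ, (da - f t) * g t = da * ustar - ustar ^ 2 / 2 := by
    have hsp : ∫ t in (0:ℝ)..τ, (da - f t) * g t
        = (∫ t in (0:ℝ)..τ, da * g t) - ∫ t in (0:ℝ)..τ, f t * g t := by
      rw [← intervalIntegral.integral_sub ((hgsub 0 τ le_rfl hτ0 hτ1).const_mul da)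
        (hIf 0 τ le_rfl hτ0 hτ1)]
      apply intervalIntegral.integral_congr
      intro t _
      ring
    have hkey := key_fubini g hτ0
      ((intervalIntegrable_iff_integrableOn_Ioc_of_le hτ0).1 (hgsub 0 τ le_rfl hτ0 hτ1))
    have hfg : ∫ t in (0:ℝ)..τ, f t * g t = (f τ) ^ 2 / 2 := hkey
    have hgτ : ∫ t in (0:ℝ)..τ, g t = f τ := rfl
    rw [hsp, intervalIntegral.integral_const_mul, hgτ, hfg, hfτ]
  -- part 2 : lower bound on [τ, 1]
  have hint2a : IntervalIntegrable (fun t => (db - L + f t) * g t) volume τ 1 := by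
    have h1 := (hgsub τ 1 hτ0 hτ1 le_rfl).const_mul (db - L)
    have h2 := hIf τ 1 hτ0 hτ1 le_rfl
    have h3 := h1.add h2
    simpa [add_mul] using h3
  have hmono2 : ∫ t in τ..1, (db - L + f t) * g t ≤ ∫ t in τ..1, dnn K (γ t) * g t := by
    refine intervalIntegral.integral_mono_on hτ1 hint2a (hIprod τ 1 hτ0 hτ1 le_rfl) ?_
    intro t ht
    exact mul_le_mul_of_nonneg_right (hlow2 t ⟨hτ0.trans ht.1, ht.2⟩) (hg0 t)
  -- integrability of the primitive based at τ
  have hφc : ContinuousOn (fun t => ∫ s in τ..t, g s) (Set.Icc τ 1) := by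
    have h := intervalIntegral.continuousOn_primitive_interval
      (f := g) (μ := volume) (a := τ) (b := 1)
      (by rw [Set.uIcc_of_le hτ1]
          exact (integrableOn_Icc_iff_integrableOn_Ioc).2
            ((intervalIntegrable_iff_integrableOn_Ioc_of_le hτ1).1 (hgsub τ 1 hτ0 hτ1 le_rfl)))
    rw [Set.uIcc_of_le hτ1] at h
    exact h
  have hint2b : IntervalIntegrable (fun t => (∫ s in τ..t, g s) * g t) volume τ 1 := by
    rw [intervalIntegrable_iff_integrableOn_Ioc_of_le hτ1]
    refine mul_integrableOn_of_bounded measurableSet_Ioc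
      ((hφc.aestronglyMeasurable measurableSet_Icc).mono_measure
        (Measure.restrict_mono Set.Ioc_subset_Icc_self le_rfl))
      ((intervalIntegrable_iff_integrableOn_Ioc_of_le hτ1).1 (hgsub τ 1 hτ0 hτ1 le_rfl))
      hg0 (C := L) ?_
    intro t ht
    have ht0 : (0:ℝ) ≤ t := hτ0.trans ht.1.le
    have h4 := hfadd τ t hτ0 ht.1.le ht.2
    have h5 := hfmono t 1 ht0 ht.2 le_rfl
    have h6 := hfnn τ hτ0 hτ1
    rw [abs_of_nonneg (hint_nonneg τ t ht.1.le), hL]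
    linarith
  have hval2 : ∫ t in τ..1, (db - L + f t) * g t
      = (db - L + ustar) * (L - ustar) + (L - ustar) ^ 2 / 2 := by
    have hτ1g : ∫ s in τ..1, g s = L - ustar := by
      have h4 := hfadd τ 1 hτ0 hτ1 le_rfl
      rw [hfτ] at h4
      rw [hL]
      linarith
    have hcongr : Set.EqOn (fun t => (db - L + f t) * g t)
        (fun t => (db - L + ustar) * g t + (∫ s in τ..t, g s) * g t) (Set.uIcc τ 1) := by
      intro t ht
      rw [Set.uIcc_of_le hτ1] at ht
      have h4 := hfadd τ t hτ0 ht.1 ht.2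
      simp only []
      rw [h4, hfτ]
      ring
    rw [intervalIntegral.integral_congr hcongr,
      intervalIntegral.integral_add ((hgsub τ 1 hτ0 hτ1 le_rfl).const_mul (db - L + ustar))
        hint2b,
      intervalIntegral.integral_const_mul,
      key_fubini g hτ1
        ((intervalIntegrable_iff_integrableOn_Ioc_of_le hτ1).1 (hgsub τ 1 hτ0 hτ1 le_rfl)),
      hτ1g]
  -- combine
  have hsplitnn : nnLength K γ
      = (∫ t in (0:ℝ)..τ, dnn K (γ t) * g t) + ∫ t in τ..1, dnn K (γ t) * g t := by
    rw [hnn]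
    exact (intervalIntegral.integral_add_adjacent_intervals
      (hIprod 0 τ le_rfl hτ0 hτ1) (hIprod τ 1 hτ0 hτ1 le_rfl)).symm
  have hid : da * ustar - ustar ^ 2 / 2
      + ((db - L + ustar) * (L - ustar) + (L - ustar) ^ 2 / 2)
      = 3 * ((da + db) / 4) ^ 2 + ((da - db) / 2) ^ 2 := by
    rw [hust, hLval]
    ring
  rw [ge_iff_le]
  calc 3 * ((da + db) / 4) ^ 2
      ≤ 3 * ((da + db) / 4) ^ 2 + ((da - db) / 2) ^ 2 := by nlinarith [sq_nonneg ((da - db)/2)]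
    _ = da * ustar - ustar ^ 2 / 2
        + ((db - L + ustar) * (L - ustar) + (L - ustar) ^ 2 / 2) := hid.symm
    _ ≤ nnLength K γ := by rw [hsplitnn]; linarith [hmono1, hmono2, hval1, hval2]
end
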